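/- arXiv:2502.15444 — 5 statements merged into one kernel-verified Lean document; each statement's English description precedes it below -/
import Mathlib

section
/- Let p ∈ (3/2, 2), a(p) = ((p-1)p/(2π(2-p)²))^((p-1)/(2-p)), σ = 2(p-1)/(2-p), and R > 0. Then the radial function s(r) = a(p)(r - R)^{-σ} satisfies Δs ≤ 4π s^{1/(p-1)} pointwise for r = |x| > R, i.e., s'' + (2/r)s' ≤ 4π s^{1/(p-1)}. -/
open Real

theorem shifted_sommerfeld_supersolution (p R : ℝ) (hp : 3/2 < p ∧ p < 2) (hR : 0 < R) :
    let a : ℝ := ((p-1)*p/(2*π*(2-p)^2)) ^ ((p-1)/(2-p))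
    let σ : ℝ := 2*(p-1)/(2-p)
    let s : ℝ → ℝ := fun r => a * (r - R) ^ (-σ)
    ∀ r : ℝ, R < r →
      deriv (deriv s) r + (2/r) * deriv s r ≤ 4*π * (s r) ^ (1/(p-1)) := by
  intro a σ s r hr
  obtain ⟨hp1, hp2⟩ := hp
  have hw : 0 < 2 - p := by linarith
  have hp1' : 0 < p - 1 := by linarith
  have hπ := Real.pi_pos
  have hC : 0 < (p-1)*p/(2*π*(2-p)^2) := by
    apply div_pos
    · nlinarith
    · positivity
  have ha : 0 < a := Real.rpow_pos_of_pos hC _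
  have hσ : 0 < σ := by
    apply div_pos <;> nlinarith
  have hr0 : 0 < r := lt_trans hR hr
  have ht : 0 < r - R := by linarith
  -- first derivative
  have hder : ∀ x : ℝ, R < x → HasDerivAt s (a * (-σ) * (x - R) ^ (-σ - 1)) x := by
    intro x hx
    have hx0 : x - R ≠ 0 := by
      have : 0 < x - R := by linarith
      exact ne_of_gt this
    have h1 : HasDerivAt (fun y : ℝ => y - R) 1 x := by
      simpa using (hasDerivAt_id x).sub_const R
    have h2 : HasDerivAt (fun y : ℝ => y ^ (-σ)) (-σ * (x - R) ^ (-σ - 1)) (x - R) :=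
      Real.hasDerivAt_rpow_const (Or.inl hx0)
    have h3 := (h2.comp x h1).const_mul a
    simpa [mul_comm, mul_assoc, mul_left_comm] using h3
  set g : ℝ → ℝ := fun x => a * (-σ) * (x - R) ^ (-σ - 1) with hgdef
  have hEq : deriv s =ᶠ[nhds r] g := by
    filter_upwards [Ioi_mem_nhds hr] with x hx
    exact (hder x hx).deriv
  have hds : deriv s r = g r := (hder r hr).deriv
  -- second derivative
  have hder2 : HasDerivAt g (a * (-σ) * (-σ - 1) * (r - R) ^ (-σ - 2)) r := by
    have hx0 : r - R ≠ 0 := ne_of_gt ht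
    have h1 : HasDerivAt (fun y : ℝ => y - R) 1 r := by
      simpa using (hasDerivAt_id r).sub_const R
    have h2 : HasDerivAt (fun y : ℝ => y ^ (-σ - 1)) ((-σ - 1) * (r - R) ^ (-σ - 1 - 1)) (r - R) :=
      Real.hasDerivAt_rpow_const (Or.inl hx0)
    have h3 := (h2.comp r h1).const_mul (a * (-σ))
    have h4 : a * (-σ) * (-σ - 1) * (r - R) ^ (-σ - 2)
        = a * (-σ) * ((-σ - 1) * (r - R) ^ (-σ - 1 - 1) * 1) := by
      have he : -σ - 1 - 1 = -σ - 2 := by ring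
      rw [he]; ring
    rw [h4]
    exact h3
  have hdds : deriv (deriv s) r = a * (-σ) * (-σ - 1) * (r - R) ^ (-σ - 2) := by
    rw [hEq.deriv_eq]
    exact hder2.deriv
  -- rewrite RHS
  have hRHS : 4*π * (s r) ^ (1/(p-1)) = a * σ * (σ + 1) * (r - R) ^ (-σ - 2) := by
    have h1 : (s r) ^ (1/(p-1)) = a ^ (1/(p-1)) * ((r - R) ^ (-σ)) ^ (1/(p-1)) := by
      simp only [s]
      exact Real.mul_rpow ha.le (Real.rpow_nonneg ht.le _)
    have h2 : ((r - R) ^ (-σ)) ^ (1/(p-1)) = (r - R) ^ (-σ - 2) := by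
      rw [← Real.rpow_mul ht.le]
      have he : -σ * (1/(p-1)) = -σ - 2 := by
        simp only [σ]
        field_simp
        ring
      rw [he]
    have h3 : a ^ (1/(p-1)) = a * ((p-1)*p/(2*π*(2-p)^2)) := by
      simp only [a]
      rw [← Real.rpow_mul hC.le]
      have he : (p-1)/(2-p) * (1/(p-1)) = (p-1)/(2-p) + 1 := by
        field_simp
        ring
      rw [he, Real.rpow_add hC, Real.rpow_one]
    have h4 : 4*π * (a * ((p-1)*p/(2*π*(2-p)^2))) = a * σ * (σ + 1) := by
      simp only [σ]
      field_simp
      ring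
    rw [h1, h2, h3, ← mul_assoc, h4]
  -- final inequality
  rw [hdds, hds, hRHS]
  have hpos : 0 < (r - R) ^ (-σ - 1) := Real.rpow_pos_of_pos ht _
  have hneg : (2/r) * g r ≤ 0 := by
    simp only [hgdef]
    have he : 2/r * (a * -σ * (r - R) ^ (-σ - 1))
        = -(2/r * (a * σ * (r - R) ^ (-σ - 1))) := by ring
    rw [he, neg_nonpos]
    positivity
  have heq2 : a * (-σ) * (-σ - 1) * (r - R) ^ (-σ - 2)
      = a * σ * (σ + 1) * (r - R) ^ (-σ - 2) := by ring
  linarith [heq2.le, hneg]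
end

section
/- Let p ∈ (3/2, 2), and let s_p(r) = b(p) r^{-σ} be the Sommerfeld solution with b(p) = ((p-1)(3p-4)/(2π(2-p)²))^((p-1)/(2-p)), σ = 2(p-1)/(2-p), and let ζ = (-5p+6+√(p²+20p-28))/(2(2-p)). Then for any k ≥ 0, the radial function ω⁺(r) = (1 + k r^{-ζ}) s_p(r) satisfies Δω⁺ ≤ 4π (ω⁺)^{1/(p-1)} pointwise for all r > 0. -/
/-!
Writing `ω⁺ = b r^{-σ} + k b r^{-(σ+ζ)}` and using `Δ r^{-s} = s (s - 1) r^{-s-2}`, the exponent `ζ`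
is the root of `(σ + ζ)(σ + ζ - 1) = σ (σ - 1) / (p - 1)`, so that
`Δω⁺ = σ (σ - 1) b r^{-σ-2} (1 + x / (p - 1))` with `x = k r^{-ζ}`. On the other side,
`4π b^{1/(p-1)} = σ (σ - 1) b` and `σ / (p - 1) = σ + 2` give
`4π (ω⁺)^{1/(p-1)} = σ (σ - 1) b r^{-σ-2} (1 + x)^{1/(p-1)}`, and Bernoulli's inequality
`1 + x / (p - 1) ≤ (1 + x)^{1/(p-1)}` (as `1/(p-1) ≥ 1`) concludes.
-/

open Real Filter Topology

noncomputable section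

def radialLaplacian (f : ℝ → ℝ) (r : ℝ) : ℝ :=
  deriv (deriv f) r + (2 / r) * deriv f r

theorem Filter.EventuallyEq.radialLaplacian_eq {f g : ℝ → ℝ} {r : ℝ} (h : f =ᶠ[𝓝 r] g) :
    radialLaplacian f r = radialLaplacian g r := by
  rw [radialLaplacian, radialLaplacian, h.deriv_eq, h.deriv.deriv_eq]

theorem deriv_const_mul_rpow_add_const_mul_rpow (c₁ a₁ c₂ a₂ : ℝ) {r : ℝ} (hr : 0 < r) :
    deriv (fun x : ℝ => c₁ * x ^ a₁ + c₂ * x ^ a₂) r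
      = c₁ * a₁ * r ^ (a₁ - 1) + c₂ * a₂ * r ^ (a₂ - 1) := by
  have h₁ := (hasDerivAt_rpow_const (p := a₁) (Or.inl hr.ne')).const_mul c₁
  have h₂ := (hasDerivAt_rpow_const (p := a₂) (Or.inl hr.ne')).const_mul c₂
  exact (h₁.add h₂).deriv.trans (by ring)

theorem radialLaplacian_const_mul_rpow_add_const_mul_rpow (c₁ s₁ c₂ s₂ : ℝ) {r : ℝ}
    (hr : 0 < r) :
    radialLaplacian (fun x : ℝ => c₁ * x ^ (-s₁) + c₂ * x ^ (-s₂)) r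
      = c₁ * (s₁ * (s₁ - 1)) * r ^ (-s₁ - 2) + c₂ * (s₂ * (s₂ - 1)) * r ^ (-s₂ - 2) := by
  have hderiv : deriv (fun x : ℝ => c₁ * x ^ (-s₁) + c₂ * x ^ (-s₂)) =ᶠ[𝓝 r]
      fun x => c₁ * -s₁ * x ^ (-s₁ - 1) + c₂ * -s₂ * x ^ (-s₂ - 1) :=
    eventually_of_mem (Ioi_mem_nhds hr) fun x hx =>
      deriv_const_mul_rpow_add_const_mul_rpow _ _ _ _ hx
  have hpow (s : ℝ) : r ^ (-s - 1) = r ^ (-s - 2) * r := by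
    rw [← rpow_add_one hr.ne']
    ring_nf
  rw [radialLaplacian, hderiv.deriv_eq, deriv_const_mul_rpow_add_const_mul_rpow _ _ _ _ hr,
    deriv_const_mul_rpow_add_const_mul_rpow _ _ _ _ hr, hpow s₁, hpow s₂]
  field_simp
  ring_nf

theorem radialLaplacian_one_add_mul_rpow_mul_rpow {b k σ ζ q r : ℝ} (hr : 0 < r)
    (hζ : (σ + ζ) * (σ + ζ - 1) = σ * (σ - 1) * q) :
    radialLaplacian (fun x => (1 + k * x ^ (-ζ)) * (b * x ^ (-σ))) r
      = σ * (σ - 1) * b * r ^ (-σ - 2) * (1 + q * (k * r ^ (-ζ))) := by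
  have hsplit : (fun x => (1 + k * x ^ (-ζ)) * (b * x ^ (-σ))) =ᶠ[𝓝 r]
      fun x => b * x ^ (-σ) + k * b * x ^ (-(σ + ζ)) :=
    eventually_of_mem (Ioi_mem_nhds hr) fun x hx => by
      simp only [neg_add, rpow_add hx]
      ring
  rw [hsplit.radialLaplacian_eq, radialLaplacian_const_mul_rpow_add_const_mul_rpow _ _ _ _ hr,
    hζ, show -(σ + ζ) - 2 = -σ - 2 + -ζ by ring, rpow_add hr]
  ring

def sommerfeldExponent (p : ℝ) : ℝ := 2 * (p - 1) / (2 - p)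

def sommerfeldCoeff (p : ℝ) : ℝ :=
  ((p - 1) * (3 * p - 4) / (2 * π * (2 - p) ^ 2)) ^ ((p - 1) / (2 - p))

def perturbationExponent (p : ℝ) : ℝ :=
  (-5 * p + 6 + √(p ^ 2 + 20 * p - 28)) / (2 * (2 - p))

section Sommerfeld

variable {p : ℝ}

theorem sommerfeldExponent_mul_one_div (hp₁ : p ≠ 1) (hp₂ : p ≠ 2) :
    sommerfeldExponent p * (1 / (p - 1)) = sommerfeldExponent p + 2 := by
  have : p - 1 ≠ 0 := sub_ne_zero.mpr hp₁
  have : 2 - p ≠ 0 := sub_ne_zero.mpr hp₂.symm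
  rw [sommerfeldExponent]
  field_simp
  ring

theorem perturbationExponent_spec (hp₁ : p ≠ 1) (hp₂ : p ≠ 2) (hD : 0 ≤ p ^ 2 + 20 * p - 28) :
    (sommerfeldExponent p + perturbationExponent p) *
        (sommerfeldExponent p + perturbationExponent p - 1)
      = sommerfeldExponent p * (sommerfeldExponent p - 1) * (1 / (p - 1)) := by
  have : p - 1 ≠ 0 := sub_ne_zero.mpr hp₁
  have : 2 - p ≠ 0 := sub_ne_zero.mpr hp₂.symm
  have hsq := sq_sqrt hD
  rw [sommerfeldExponent, perturbationExponent]
  generalize √(p ^ 2 + 20 * p - 28) = d at hsq ⊢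
  field_simp
  linear_combination hsq

theorem one_lt_sommerfeldExponent (hp₁ : 4 / 3 < p) (hp₂ : p < 2) : 1 < sommerfeldExponent p := by
  rw [sommerfeldExponent, lt_div_iff₀ (by linarith)]
  linarith

theorem sommerfeldCoeff_pos (hp₁ : 4 / 3 < p) (hp₂ : p < 2) : 0 < sommerfeldCoeff p := by
  have : 0 < p - 1 := by linarith
  have : 0 < 3 * p - 4 := by linarith
  have : 0 < 2 - p := by linarith
  unfold sommerfeldCoeff
  positivity

theorem four_pi_mul_sommerfeldCoeff_rpow (hp₁ : 4 / 3 < p) (hp₂ : p < 2) :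
    4 * π * sommerfeldCoeff p ^ (1 / (p - 1))
      = sommerfeldExponent p * (sommerfeldExponent p - 1) * sommerfeldCoeff p := by
  have : 0 < p - 1 := by linarith
  have : 0 < 3 * p - 4 := by linarith
  have : 0 < 2 - p := by linarith
  set A := (p - 1) * (3 * p - 4) / (2 * π * (2 - p) ^ 2)
  have hA : 0 < A := by positivity
  have hexp : (p - 1) / (2 - p) * (1 / (p - 1)) = (p - 1) / (2 - p) + 1 := by
    field_simp
    ring
  have h4πA : 4 * π * A = sommerfeldExponent p * (sommerfeldExponent p - 1) := by
    simp only [A, sommerfeldExponent]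
    field_simp
    ring
  rw [sommerfeldCoeff, ← rpow_mul hA.le, hexp, rpow_add_one hA.ne', ← h4πA]
  ring

theorem four_pi_mul_sommerfeld_rpow (hp₁ : 4 / 3 < p) (hp₂ : p < 2) {r : ℝ} (hr : 0 < r) :
    4 * π * (sommerfeldCoeff p * r ^ (-sommerfeldExponent p)) ^ (1 / (p - 1))
      = sommerfeldExponent p * (sommerfeldExponent p - 1) * sommerfeldCoeff p
          * r ^ (-sommerfeldExponent p - 2) := by
  rw [mul_rpow (sommerfeldCoeff_pos hp₁ hp₂).le (rpow_nonneg hr.le _), ← rpow_mul hr.le,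
    neg_mul, sommerfeldExponent_mul_one_div (by linarith) hp₂.ne, ← mul_assoc,
    four_pi_mul_sommerfeldCoeff_rpow hp₁ hp₂, neg_add', sub_eq_add_neg]

end Sommerfeld

def omegaPlus (p k : ℝ) (r : ℝ) : ℝ :=
  (1 + k * r ^ (-perturbationExponent p)) * (sommerfeldCoeff p * r ^ (-sommerfeldExponent p))

theorem omega_plus_supersolution (p k : ℝ) (hp : 3/2 < p ∧ p < 2) (hk : 0 ≤ k) :
    let b : ℝ := ((p-1)*(3*p-4)/(2*π*(2-p)^2)) ^ ((p-1)/(2-p))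
    let σ : ℝ := 2*(p-1)/(2-p)
    let ζ : ℝ := (-5*p + 6 + Real.sqrt (p^2 + 20*p - 28)) / (2*(2-p))
    let ω : ℝ → ℝ := fun r => (1 + k * r ^ (-ζ)) * (b * r ^ (-σ))
    ∀ r : ℝ, 0 < r →
      deriv (deriv ω) r + (2/r) * deriv ω r ≤ 4*π * (ω r) ^ (1/(p-1)) := by
  obtain ⟨hp₁, hp₂⟩ := hp
  show ∀ r, 0 < r → radialLaplacian (omegaPlus p k) r ≤ 4 * π * omegaPlus p k r ^ (1 / (p - 1))
  intro r hr
  set σ := sommerfeldExponent p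
  set b := sommerfeldCoeff p
  set x := k * r ^ (-perturbationExponent p)
  have hLHS : radialLaplacian (omegaPlus p k) r
      = σ * (σ - 1) * b * r ^ (-σ - 2) * (1 + 1 / (p - 1) * x) :=
    radialLaplacian_one_add_mul_rpow_mul_rpow hr
      (perturbationExponent_spec (by linarith) hp₂.ne (by nlinarith))
  have hσ : 1 < σ := one_lt_sommerfeldExponent (by linarith) hp₂
  have hb : 0 < b := sommerfeldCoeff_pos (by linarith) hp₂
  have hx : 0 ≤ x := mul_nonneg hk (rpow_nonneg hr.le _)
  have hRHS : 4 * π * omegaPlus p k r ^ (1 / (p - 1))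
      = σ * (σ - 1) * b * r ^ (-σ - 2) * (1 + x) ^ (1 / (p - 1)) := by
    rw [omegaPlus, mul_rpow (by linarith) (mul_nonneg hb.le (rpow_nonneg hr.le _)),
      ← four_pi_mul_sommerfeld_rpow (by linarith) hp₂ hr]
    ring
  have hcoeff : 0 ≤ σ * (σ - 1) * b * r ^ (-σ - 2) :=
    mul_nonneg (mul_nonneg (mul_nonneg (by linarith) (by linarith)) hb.le) (rpow_nonneg hr.le _)
  have hq : 1 ≤ 1 / (p - 1) := by
    rw [le_div_iff₀ (by linarith)]
    linarith
  rw [hLHS, hRHS]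
  exact mul_le_mul_of_nonneg_left (one_add_mul_self_le_rpow_one_add (by linarith) hq) hcoeff
end
end

section
/- Let p ∈ (3/2, 2), s_p and ζ as in the Sommerfeld setting, and let 0 ≤ a. Then the radial function ω⁻(r) = (1 + a r^{-ζ})^{-(p-1)/(2-p)} s_p(r) satisfies Δω⁻ ≥ 4π (ω⁻)^{1/(p-1)} pointwise for all r > 0. -/
/-!
With `u = 1 + a r^(-ζ)` and `X = a r^(-ζ)`, a profile `C u^m r^k` has radial Laplacian
`C u^(m-2) r^(k-2) ((k(k+1) + P X) u + m(m-1) ζ² X²)`, where `P = k(k+1) - mζ(2k+1) + mζ²`.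
For `ω⁻` one has `m = -σ/2` and `k = -σ`, so `P = -(σ/2)(ζ² + (2σ-1)ζ - 2(σ-1))`, which vanishes
because `ζ` is a root of this quadratic, while `m(m-1) ≥ 0`. Dropping the square term leaves
`b σ(σ-1) u^(m-1) r^(-σ-2)`, and this is exactly `4π (ω⁻)^(1/(p-1))`: the power `1/(p-1)` sends the
exponents `m, -σ` to `m-1, -σ-2`, and `4π b^(1/(p-1)) = σ(σ-1) b`.
-/

open Real Filter Topology

noncomputable def radialProfile (C a z m k r : ℝ) : ℝ := C * (1 + a * r ^ (-z)) ^ m * r ^ k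

section RadialProfile

variable {C a z m k r : ℝ}

lemma hasDerivAt_radialProfile (ha : 0 ≤ a) (hr : 0 < r) :
    HasDerivAt (radialProfile C a z m k)
      (radialProfile (C * k) a z m (k - 1) r
        + radialProfile (-(C * m * z * a)) a z (m - 1) (k - 1 - z) r) r := by
  have hu : 0 < 1 + a * r ^ (-z) := by positivity
  have hbase : HasDerivAt (fun x => 1 + a * x ^ (-z)) (a * (-z * r ^ (-z - 1))) r :=
    ((hasDerivAt_rpow_const (Or.inl hr.ne')).const_mul a).const_add 1
  refine (((hbase.rpow_const (Or.inl hu.ne')).const_mul C).mul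
    (hasDerivAt_rpow_const (Or.inl hr.ne'))).congr_deriv ?_
  simp only [radialProfile]
  rw [show k - 1 - z = (-z - 1) + k by ring, rpow_add hr]
  ring

lemma deriv_radialProfile_eventuallyEq (ha : 0 ≤ a) (hr : 0 < r) :
    deriv (radialProfile C a z m k) =ᶠ[𝓝 r]
      radialProfile (C * k) a z m (k - 1)
        + radialProfile (-(C * m * z * a)) a z (m - 1) (k - 1 - z) := by
  filter_upwards [eventually_gt_nhds hr] with t ht
  exact (hasDerivAt_radialProfile ha ht).deriv

theorem radialLaplacian_radialProfile (ha : 0 ≤ a) (hr : 0 < r) :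
    deriv (deriv (radialProfile C a z m k)) r + 2 / r * deriv (radialProfile C a z m k) r =
      radialProfile C a z (m - 2) (k - 2) r *
        ((k * (k + 1) + (k * (k + 1) - m * z * (2 * k + 1) + m * z ^ 2) * (a * r ^ (-z)))
            * (1 + a * r ^ (-z)) + m * (m - 1) * z ^ 2 * (a * r ^ (-z)) ^ 2) := by
  have hu : 0 < 1 + a * r ^ (-z) := by positivity
  rw [(deriv_radialProfile_eventuallyEq ha hr).deriv_eq,
    ((hasDerivAt_radialProfile ha hr).add (hasDerivAt_radialProfile ha hr)).deriv,
    (hasDerivAt_radialProfile ha hr).deriv]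
  simp only [radialProfile, rpow_sub hu, rpow_one, rpow_two]
  simp only [rpow_sub hr, rpow_one, rpow_two, rpow_neg hr.le]
  field_simp
  ring

theorem radialProfile_le_radialLaplacian (hC : 0 ≤ C) (ha : 0 ≤ a) (hr : 0 < r)
    (hm : 0 ≤ m * (m - 1)) (hz : k * (k + 1) - m * z * (2 * k + 1) + m * z ^ 2 = 0) :
    radialProfile (C * (k * (k + 1))) a z (m - 1) (k - 2) r ≤
      deriv (deriv (radialProfile C a z m k)) r + 2 / r * deriv (radialProfile C a z m k) r := by
  have hu : 0 < 1 + a * r ^ (-z) := by positivity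
  have hlhs : radialProfile (C * (k * (k + 1))) a z (m - 1) (k - 2) r =
      radialProfile C a z (m - 2) (k - 2) r * (k * (k + 1) * (1 + a * r ^ (-z))) := by
    simp only [radialProfile]
    rw [show m - 1 = m - 2 + 1 by ring, rpow_add_one hu.ne']
    ring
  have hprofile : 0 ≤ radialProfile C a z (m - 2) (k - 2) r := by
    unfold radialProfile; positivity
  rw [radialLaplacian_radialProfile ha hr, hz, hlhs]
  gcongr
  nlinarith [mul_nonneg hm (sq_nonneg (z * (a * r ^ (-z))))]

lemma radialProfile_rpow (hC : 0 ≤ C) (ha : 0 ≤ a) (hr : 0 < r) (q : ℝ) :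
    radialProfile C a z m k r ^ q = radialProfile (C ^ q) a z (m * q) (k * q) r := by
  have hu : 0 < 1 + a * r ^ (-z) := by positivity
  simp only [radialProfile]
  rw [mul_rpow (by positivity) (by positivity), mul_rpow hC (by positivity), ← rpow_mul hu.le,
    ← rpow_mul hr.le]

end RadialProfile

section SommerfeldExponents

variable {p : ℝ}

lemma sommerfeld_sigma_mul_one_div (hp1 : p ≠ 1) (hp2 : p ≠ 2) :
    2 * (p - 1) / (2 - p) * (1 / (p - 1)) = 2 * (p - 1) / (2 - p) + 2 := by
  have : p - 1 ≠ 0 := sub_ne_zero.mpr hp1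
  have : 2 - p ≠ 0 := sub_ne_zero.mpr (Ne.symm hp2)
  field_simp
  ring

lemma four_pi_mul_sommerfeld_const_rpow (hp1 : 4 / 3 < p) (hp2 : p < 2) :
    4 * π * (((p - 1) * (3 * p - 4) / (2 * π * (2 - p) ^ 2)) ^ ((p - 1) / (2 - p))) ^ (1 / (p - 1))
      = ((p - 1) * (3 * p - 4) / (2 * π * (2 - p) ^ 2)) ^ ((p - 1) / (2 - p))
        * (2 * (p - 1) / (2 - p) * (2 * (p - 1) / (2 - p) - 1)) := by
  have hc : 0 < p - 1 := by linarith
  have hd : 0 < 2 - p := by linarith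
  have hK : 0 < (p - 1) * (3 * p - 4) / (2 * π * (2 - p) ^ 2) := by
    have : 0 < 3 * p - 4 := by linarith
    positivity
  rw [← rpow_mul hK.le, show (p - 1) / (2 - p) * (1 / (p - 1)) = (p - 1) / (2 - p) + 1 by
    field_simp; ring, rpow_add_one hK.ne']
  field_simp
  ring

lemma sommerfeld_zeta_quadratic (hp : p ≠ 2) (hD : 0 ≤ p ^ 2 + 20 * p - 28) :
    let σ : ℝ := 2 * (p - 1) / (2 - p)
    let ζ : ℝ := (-5 * p + 6 + √(p ^ 2 + 20 * p - 28)) / (2 * (2 - p))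
    ζ ^ 2 + (2 * σ - 1) * ζ - 2 * (σ - 1) = 0 := by
  intro σ ζ
  have : 2 - p ≠ 0 := sub_ne_zero.mpr (Ne.symm hp)
  have hs := sq_sqrt hD
  simp only [σ, ζ]
  generalize √(p ^ 2 + 20 * p - 28) = s at hs ⊢
  field_simp
  linear_combination hs

end SommerfeldExponents

theorem omega_minus_subsolution (p a : ℝ) (hp : 3/2 < p ∧ p < 2) (ha : 0 ≤ a) :
    let b : ℝ := ((p-1)*(3*p-4)/(2*π*(2-p)^2)) ^ ((p-1)/(2-p))
    let σ : ℝ := 2*(p-1)/(2-p)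
    let ζ : ℝ := (-5*p + 6 + Real.sqrt (p^2 + 20*p - 28)) / (2*(2-p))
    let ω : ℝ → ℝ := fun r => (1 + a * r ^ (-ζ)) ^ (-(p-1)/(2-p)) * (b * r ^ (-σ))
    ∀ r : ℝ, 0 < r →
      deriv (deriv ω) r + (2/r) * deriv ω r ≥ 4*π * (ω r) ^ (1/(p-1)) := by
  intro b σ ζ ω r hr
  obtain ⟨hp1, hp2⟩ := hp
  have hσ : 0 < σ := div_pos (by linarith) (by linarith)
  have hb : 0 < b := rpow_pos_of_pos (div_pos (mul_pos (by linarith) (by linarith)) (by positivity)) _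
  have hω : ω = radialProfile b a ζ (-σ / 2) (-σ) := by
    funext t
    simp only [ω, radialProfile, show -(p - 1) / (2 - p) = -σ / 2 by simp only [σ]; ring]
    ring
  have hq : σ * (1 / (p - 1)) = σ + 2 := sommerfeld_sigma_mul_one_div (by linarith) (by linarith)
  have hbq : 4 * π * b ^ (1 / (p - 1)) = b * (σ * (σ - 1)) :=
    four_pi_mul_sommerfeld_const_rpow (by linarith) hp2
  have hζ : ζ ^ 2 + (2 * σ - 1) * ζ - 2 * (σ - 1) = 0 :=
    sommerfeld_zeta_quadratic (by linarith) (by nlinarith)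
  rw [ge_iff_le, hω, radialProfile_rpow hb.le ha hr,
    show -σ / 2 * (1 / (p - 1)) = -σ / 2 - 1 by linear_combination (-1 / 2) * hq,
    show -σ * (1 / (p - 1)) = -σ - 2 by linear_combination -hq]
  calc 4 * π * radialProfile (b ^ (1 / (p - 1))) a ζ (-σ / 2 - 1) (-σ - 2) r
      = radialProfile (b * (-σ * (-σ + 1))) a ζ (-σ / 2 - 1) (-σ - 2) r := by
        simp only [radialProfile]
        linear_combination (1 + a * r ^ (-ζ)) ^ (-σ / 2 - 1) * r ^ (-σ - 2) * hbq
    _ ≤ _ := radialProfile_le_radialLaplacian hb.le ha hr (by nlinarith)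
        (by linear_combination (-σ / 2) * hζ)
end

section
/- Suppose ψ, φ : ℝ³ \ F → ℝ are C² functions (F a finite set) satisfying Δψ = (γ ψ^{2p-2} - φ)ψ and Δφ = 4πψ² on ℝ³ \ F, with ψ ≥ 0, γ ≥ 0, p ≥ 1. Then P := √(4πψ² + φ²) is subharmonic on the set where P > 0: specifically, ΔP² ≥ 2|∇P|², hence ΔP ≥ 0 there. -/
/-!
Since `P² = 4πψ² + φ²`, the product rule `Δ(f²) = 2fΔf + 2|∇f|²` and the two field equations
give `ΔP² = 8πγψ^{2p} + 8π|∇ψ|² + 2|∇φ|²`: the terms `∓8πφψ²` coming from `ψΔψ` and `φΔφ` cancel.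
Differentiating `P² = 4πψ² + φ²` once gives `P∇P = 4πψ∇ψ + φ∇φ`, and Cauchy–Schwarz turns this
into `|∇P|² ≤ 4π|∇ψ|² + |∇φ|²`, so `ΔP² ≥ 2|∇P|²`. Finally `ΔP² = 2PΔP + 2|∇P|²`, so `ΔP ≥ 0`
wherever `P > 0`.
-/

open Real Topology
open scoped Gradient

/-- The Laplacian of a function on ℝ³, as the sum of second derivatives along
the coordinate directions. -/
noncomputable def lap (f : EuclideanSpace ℝ (Fin 3) → ℝ) (x : EuclideanSpace ℝ (Fin 3)) : ℝ :=
  ∑ i : Fin 3, iteratedDeriv 2 (fun t : ℝ => f (x + t • EuclideanSpace.single i 1)) 0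

lemma norm_mul_smul_add_smul_sq_le {F : Type*} [NormedAddCommGroup F] [InnerProductSpace ℝ F]
    {c : ℝ} (hc : 0 ≤ c) (a b : ℝ) (u v : F) :
    ‖(c * a) • u + b • v‖ ^ 2 ≤ (c * a ^ 2 + b ^ 2) * (c * ‖u‖ ^ 2 + ‖v‖ ^ 2) := by
  have htri : ‖(c * a) • u + b • v‖ ≤ c * |a| * ‖u‖ + |b| * ‖v‖ := by
    refine (norm_add_le _ _).trans_eq ?_
    rw [norm_smul, norm_smul, Real.norm_eq_abs, Real.norm_eq_abs, abs_mul, abs_of_nonneg hc]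
  calc ‖(c * a) • u + b • v‖ ^ 2 ≤ (c * |a| * ‖u‖ + |b| * ‖v‖) ^ 2 :=
        pow_le_pow_left₀ (norm_nonneg _) htri 2
    _ ≤ (c * a ^ 2 + b ^ 2) * (c * ‖u‖ ^ 2 + ‖v‖ ^ 2) := by
        rw [← sq_abs a, ← sq_abs b]
        nlinarith [mul_nonneg hc (sq_nonneg (|a| * ‖v‖ - |b| * ‖u‖))]

section Gradient

variable {F : Type*} [NormedAddCommGroup F] [InnerProductSpace ℝ F] [CompleteSpace F]
  {f g : F → ℝ} {x : F}

lemma gradient_fun_add (hf : DifferentiableAt ℝ f x) (hg : DifferentiableAt ℝ g x) :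
    ∇ (fun y => f y + g y) x = ∇ f x + ∇ g x :=
  (hasGradientAt_iff_hasFDerivAt.2 <| by
    simpa [toDual_gradient] using hf.hasFDerivAt.fun_add hg.hasFDerivAt).gradient

lemma gradient_fun_const_mul (c : ℝ) (hf : DifferentiableAt ℝ f x) :
    ∇ (fun y => c * f y) x = c • ∇ f x :=
  (hasGradientAt_iff_hasFDerivAt.2 <| by
    simpa [toDual_gradient] using hf.hasFDerivAt.const_mul c).gradient

lemma gradient_fun_sq (hf : DifferentiableAt ℝ f x) :
    ∇ (fun y => f y ^ 2) x = (2 * f x) • ∇ f x :=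
  (hasGradientAt_iff_hasFDerivAt.2 <| by
    simpa [toDual_gradient] using hf.hasFDerivAt.pow 2).gradient

lemma norm_gradient_sqrt_sq_le {c : ℝ} (hc : 0 ≤ c) (hf : DifferentiableAt ℝ f x)
    (hg : DifferentiableAt ℝ g x) (hpos : 0 < c * f x ^ 2 + g x ^ 2) :
    ‖∇ (fun y => √(c * f y ^ 2 + g y ^ 2)) x‖ ^ 2 ≤ c * ‖∇ f x‖ ^ 2 + ‖∇ g x‖ ^ 2 := by
  set P : F → ℝ := fun y => √(c * f y ^ 2 + g y ^ 2)
  have hcf : DifferentiableAt ℝ (fun y => c * f y ^ 2) x := (hf.pow 2).const_mul c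
  have hP : DifferentiableAt ℝ P x := (hcf.add (hg.pow 2)).sqrt hpos.ne'
  have hPx : P x ^ 2 = c * f x ^ 2 + g x ^ 2 := sq_sqrt hpos.le
  have hP_sq : (fun y => P y ^ 2) = fun y => c * f y ^ 2 + g y ^ 2 :=
    funext fun y => sq_sqrt (by positivity)
  have hgrad : P x • ∇ P x = (c * f x) • ∇ f x + g x • ∇ g x := by
    refine smul_right_injective F (two_ne_zero (α := ℝ)) ?_
    simp only [smul_add, smul_smul]
    rw [← gradient_fun_sq hP, hP_sq, gradient_fun_add hcf (hg.fun_pow 2),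
      gradient_fun_const_mul c (hf.fun_pow 2), gradient_fun_sq hf, gradient_fun_sq hg, smul_smul]
    ring_nf
  have hCS := norm_mul_smul_add_smul_sq_le hc (f x) (g x) (∇ f x) (∇ g x)
  rw [← hgrad, norm_smul, mul_pow, Real.norm_eq_abs, sq_abs, hPx] at hCS
  exact le_of_mul_le_mul_left hCS hpos

end Gradient

lemma iteratedDeriv_two_fun_sq {f : ℝ → ℝ} {t : ℝ} (hf : ContDiffAt ℝ 2 f t) :
    iteratedDeriv 2 (fun s => f s ^ 2) t = 2 * f t * iteratedDeriv 2 f t + 2 * deriv f t ^ 2 := by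
  simp only [pow_two]
  rw [iteratedDeriv_fun_mul hf hf]
  simp only [Finset.sum_range_succ, Finset.range_one, Finset.sum_singleton, Nat.choose_zero_right,
    Nat.choose_succ_self_right, Nat.choose_self, Nat.cast_one, iteratedDeriv_zero,
    iteratedDeriv_one, tsub_zero, tsub_self, Nat.add_one_sub_one, one_mul]
  ring

section Directional

variable {E : Type*} [NormedAddCommGroup E] [NormedSpace ℝ E] {f : E → ℝ} {x : E}

lemma ContDiffAt.comp_add_smul {n : WithTop ℕ∞} (hf : ContDiffAt ℝ n f x) (v : E) :
    ContDiffAt ℝ n (fun t : ℝ => f (x + t • v)) 0 := by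
  have hline : ContDiff ℝ n (fun t : ℝ => x + t • v) :=
    contDiff_const.add (contDiff_id.smul contDiff_const)
  exact ContDiffAt.comp 0 (by simpa using hf) hline.contDiffAt

lemma deriv_comp_add_smul (hf : DifferentiableAt ℝ f x) (v : E) :
    deriv (fun t : ℝ => f (x + t • v)) 0 = fderiv ℝ f x v := by
  have hline : HasDerivAt (fun t : ℝ => x + t • v) v 0 := by
    simpa using ((hasDerivAt_id (0 : ℝ)).smul_const v).const_add x
  have hf' : HasFDerivAt f (fderiv ℝ f x) (x + (0 : ℝ) • v) := by simpa using hf.hasFDerivAt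
  exact (hf'.comp_hasDerivAt 0 hline).deriv

end Directional

lemma EuclideanSpace.norm_gradient_sq {ι : Type*} [Fintype ι] [DecidableEq ι]
    (f : EuclideanSpace ℝ ι → ℝ) (x : EuclideanSpace ℝ ι) :
    ‖∇ f x‖ ^ 2 = ∑ i, fderiv ℝ f x (EuclideanSpace.single i 1) ^ 2 := by
  simp only [EuclideanSpace.norm_sq_eq, ← inner_gradient_left, EuclideanSpace.inner_single_right]
  simp

section Laplacian

variable {f g : EuclideanSpace ℝ (Fin 3) → ℝ} {x : EuclideanSpace ℝ (Fin 3)}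

lemma lap_fun_add (hf : ContDiffAt ℝ 2 f x) (hg : ContDiffAt ℝ 2 g x) :
    lap (fun y => f y + g y) x = lap f x + lap g x := by
  simp only [lap, ← Finset.sum_add_distrib]
  exact Finset.sum_congr rfl fun i _ =>
    iteratedDeriv_fun_add (hf.comp_add_smul _) (hg.comp_add_smul _)

lemma lap_fun_const_mul (c : ℝ) : lap (fun y => c * f y) x = c * lap f x := by
  simp [lap, Finset.mul_sum]

lemma lap_fun_sq (hf : ContDiffAt ℝ 2 f x) :
    lap (fun y => f y ^ 2) x = 2 * f x * lap f x + 2 * ‖∇ f x‖ ^ 2 := by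
  simp only [lap, EuclideanSpace.norm_gradient_sq, Finset.mul_sum, ← Finset.sum_add_distrib]
  refine Finset.sum_congr rfl fun i _ => ?_
  rw [iteratedDeriv_two_fun_sq (hf.comp_add_smul _),
    deriv_comp_add_smul (hf.differentiableAt two_ne_zero)]
  simp

end Laplacian

theorem P_subharmonic_general (p γ : ℝ) (hγ : 0 ≤ γ)
    (F : Set (EuclideanSpace ℝ (Fin 3))) (hF : F.Finite)
    (ψ φ : EuclideanSpace ℝ (Fin 3) → ℝ)
    (hψC2 : ContDiffOn ℝ 2 ψ Fᶜ) (hφC2 : ContDiffOn ℝ 2 φ Fᶜ)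
    (hψ0 : ∀ x, 0 ≤ ψ x)
    (heuler : ∀ x ∈ Fᶜ, lap ψ x = (γ * ψ x ^ (2*p-2) - φ x) * ψ x)
    (hpoisson : ∀ x ∈ Fᶜ, lap φ x = 4*π * ψ x ^ 2) :
    let P : EuclideanSpace ℝ (Fin 3) → ℝ := fun x => Real.sqrt (4*π * ψ x ^ 2 + φ x ^ 2)
    ∀ x ∈ Fᶜ, 0 < P x →
      lap (fun y => P y ^ 2) x ≥ 2 * ‖gradient P x‖ ^ 2 ∧ 0 ≤ lap P x := by
  intro P x hx hPx
  have hnx : Fᶜ ∈ 𝓝 x := hF.isClosed.isOpen_compl.mem_nhds hx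
  have hψ : ContDiffAt ℝ 2 ψ x := hψC2.contDiffAt hnx
  have hφ : ContDiffAt ℝ 2 φ x := hφC2.contDiffAt hnx
  have hψ2 : ContDiffAt ℝ 2 (fun y => 4*π * ψ y ^ 2) x := contDiffAt_const.mul (hψ.pow 2)
  have hqx : 0 < 4*π * ψ x ^ 2 + φ x ^ 2 := sqrt_pos.1 hPx
  have hP : ContDiffAt ℝ 2 P x := (hψ2.add (hφ.pow 2)).sqrt hqx.ne'
  have hP_sq : (fun y => P y ^ 2) = fun y => 4*π * ψ y ^ 2 + φ y ^ 2 :=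
    funext fun y => sq_sqrt (by positivity)
  have hlap_sq : lap (fun y => P y ^ 2) x
      = 8*π * γ * ψ x ^ (2*p-2) * ψ x ^ 2 + 8*π * ‖∇ ψ x‖ ^ 2 + 2 * ‖∇ φ x‖ ^ 2 := by
    rw [hP_sq, lap_fun_add hψ2 (hφ.pow 2), lap_fun_const_mul, lap_fun_sq hψ, lap_fun_sq hφ,
      heuler x hx, hpoisson x hx]
    ring
  have hgrad : ‖∇ P x‖ ^ 2 ≤ 4*π * ‖∇ ψ x‖ ^ 2 + ‖∇ φ x‖ ^ 2 :=
    norm_gradient_sqrt_sq_le (by positivity) (hψ.differentiableAt two_ne_zero)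
      (hφ.differentiableAt two_ne_zero) hqx
  have hγψ : 0 ≤ 8*π * γ * ψ x ^ (2*p-2) * ψ x ^ 2 := by
    have := rpow_nonneg (hψ0 x) (2*p-2)
    positivity
  have hfirst : lap (fun y => P y ^ 2) x ≥ 2 * ‖∇ P x‖ ^ 2 := by
    rw [hlap_sq]
    linarith
  refine ⟨hfirst, nonneg_of_mul_nonneg_right (a := 2 * P x) ?_ (by positivity)⟩
  linarith [lap_fun_sq hP]

theorem P_subharmonic (p γ : ℝ) (hp : 1 ≤ p) (hγ : 0 ≤ γ)
    (F : Set (EuclideanSpace ℝ (Fin 3))) (hF : F.Finite)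
    (ψ φ : EuclideanSpace ℝ (Fin 3) → ℝ)
    (hψC2 : ContDiffOn ℝ 2 ψ Fᶜ) (hφC2 : ContDiffOn ℝ 2 φ Fᶜ)
    (hψ0 : ∀ x, 0 ≤ ψ x)
    (heuler : ∀ x ∈ Fᶜ, lap ψ x = (γ * ψ x ^ (2*p-2) - φ x) * ψ x)
    (hpoisson : ∀ x ∈ Fᶜ, lap φ x = 4*π * ψ x ^ 2) :
    let P : EuclideanSpace ℝ (Fin 3) → ℝ := fun x => Real.sqrt (4*π * ψ x ^ 2 + φ x ^ 2)
    ∀ x ∈ Fᶜ, 0 < P x →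
      lap (fun y => P y ^ 2) x ≥ 2 * ‖gradient P x‖ ^ 2 ∧ 0 ≤ lap P x :=
  P_subharmonic_general p γ hγ F hF ψ φ hψC2 hφC2 hψ0 heuler hpoisson
end

section
/- Let γ ≥ 4√π, b = γ/2, and suppose ψ, φ : ℝ³ \ {R₁,...,R_K} → ℝ are C², ψ > 0, satisfying Δψ = (γψ - φ)ψ and Δφ = 4πψ². Then on the set S = {x : φ(x) - bψ(x) < 0}, the function g = φ - bψ satisfies Δg ≤ ψ²(4π - γ²/4) ≤ 0, i.e., g is superharmonic on S. -/
open Real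

lemma lap_sub_const_mul (f h : EuclideanSpace ℝ (Fin 3) → ℝ) (c : ℝ)
    (s : Set (EuclideanSpace ℝ (Fin 3))) (hs : IsOpen s) (x : EuclideanSpace ℝ (Fin 3))
    (hx : x ∈ s) (hf : ContDiffOn ℝ 2 f s) (hh : ContDiffOn ℝ 2 h s) :
    lap (fun y => f y - c * h y) x = lap f x - c * lap h x := by
  unfold lap
  rw [show (c * ∑ i : Fin 3, iteratedDeriv 2 (fun t : ℝ => h (x + t • EuclideanSpace.single i 1)) 0)
      = ∑ i : Fin 3, c * iteratedDeriv 2 (fun t : ℝ => h (x + t • EuclideanSpace.single i 1)) 0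
      from Finset.mul_sum _ _ _, ← Finset.sum_sub_distrib]
  refine Finset.sum_congr rfl fun i _ => ?_

  set ℓ : ℝ → EuclideanSpace ℝ (Fin 3) := fun t => x + t • EuclideanSpace.single i 1 with hℓ
  have hℓC : ContDiff ℝ 2 ℓ := contDiff_const.add (contDiff_id.smul contDiff_const)
  set U : Set ℝ := ℓ ⁻¹' s with hU
  have hUopen : IsOpen U := hs.preimage hℓC.continuous
  have h0 : (0:ℝ) ∈ U := by simp [hU, hℓ, hx]
  have hFc : ContDiffOn ℝ 2 (f ∘ ℓ) U := hf.comp hℓC.contDiffOn (Set.mapsTo_preimage ℓ s)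
  have hHc : ContDiffOn ℝ 2 (h ∘ ℓ) U := hh.comp hℓC.contDiffOn (Set.mapsTo_preimage ℓ s)
  have hFd : ContDiffOn ℝ 1 (deriv (f ∘ ℓ)) U :=
    hFc.deriv_of_isOpen hUopen (by norm_num : (1:WithTop ℕ∞) + 1 ≤ 2)
  have hHd : ContDiffOn ℝ 1 (deriv (h ∘ ℓ)) U :=
    hHc.deriv_of_isOpen hUopen (by norm_num : (1:WithTop ℕ∞) + 1 ≤ 2)
  have hdiffF : ∀ t ∈ U, DifferentiableAt ℝ (f ∘ ℓ) t := fun t ht =>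
    (hFc.contDiffAt (hUopen.mem_nhds ht)).differentiableAt two_ne_zero
  have hdiffH : ∀ t ∈ U, DifferentiableAt ℝ (h ∘ ℓ) t := fun t ht =>
    (hHc.contDiffAt (hUopen.mem_nhds ht)).differentiableAt two_ne_zero
  have hev : deriv (fun t => f (ℓ t) - c * h (ℓ t)) =ᶠ[nhds (0:ℝ)]
      fun t => deriv (f ∘ ℓ) t - c * deriv (h ∘ ℓ) t := by
    filter_upwards [hUopen.mem_nhds h0] with t ht
    rw [show (fun t => f (ℓ t) - c * h (ℓ t)) = fun t => (f ∘ ℓ) t - c * (h ∘ ℓ) t from rfl]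
    rw [deriv_fun_sub (hdiffF t ht) ((hdiffH t ht).const_mul c), deriv_const_mul c (hdiffH t ht)]
  have hDF0 : DifferentiableAt ℝ (deriv (f ∘ ℓ)) 0 :=
    (hFd.contDiffAt (hUopen.mem_nhds h0)).differentiableAt one_ne_zero
  have hDH0 : DifferentiableAt ℝ (deriv (h ∘ ℓ)) 0 :=
    (hHd.contDiffAt (hUopen.mem_nhds h0)).differentiableAt one_ne_zero
  have key : ∀ g : ℝ → ℝ, iteratedDeriv 2 g 0 = deriv (deriv g) 0 := by
    intro g
    rw [show (2:ℕ) = 1 + 1 from rfl, iteratedDeriv_succ, iteratedDeriv_one]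
  rw [key, key, key, hev.deriv_eq,
    deriv_fun_sub hDF0 (hDH0.const_mul c), deriv_const_mul c hDH0]
  rfl

theorem g_superharmonic_critical (γ : ℝ) (hγ : 4 * Real.sqrt π ≤ γ)
    (F : Set (EuclideanSpace ℝ (Fin 3))) (hF : F.Finite)
    (ψ φ : EuclideanSpace ℝ (Fin 3) → ℝ)
    (hψC2 : ContDiffOn ℝ 2 ψ Fᶜ) (hφC2 : ContDiffOn ℝ 2 φ Fᶜ)
    (hψpos : ∀ x ∈ Fᶜ, 0 < ψ x)
    (heuler : ∀ x ∈ Fᶜ, lap ψ x = (γ * ψ x - φ x) * ψ x)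
    (hpoisson : ∀ x ∈ Fᶜ, lap φ x = 4*π * ψ x ^ 2) :
    let b : ℝ := γ/2
    let g : EuclideanSpace ℝ (Fin 3) → ℝ := fun x => φ x - b * ψ x
    ∀ x ∈ Fᶜ, g x < 0 →
      lap g x ≤ ψ x ^ 2 * (4*π - γ^2/4) ∧ ψ x ^ 2 * (4*π - γ^2/4) ≤ 0 := by
  intro b g x hx hgx
  have hopen : IsOpen Fᶜ := hF.isClosed.isOpen_compl
  have hlap : lap g x = lap φ x - b * lap ψ x :=
    lap_sub_const_mul φ ψ b Fᶜ hopen x hx hφC2 hψC2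
  have hψx := hψpos x hx
  have hγpos : 0 < γ := lt_of_lt_of_le (by positivity) hγ
  have hπ : Real.sqrt π ^ 2 = π := Real.sq_sqrt Real.pi_pos.le
  have hγ2 : 16 * π ≤ γ ^ 2 := by nlinarith [Real.sqrt_nonneg π]
  have hφlt : φ x < b * ψ x := by simpa [g, sub_neg] using hgx
  have hφlt' : φ x < γ/2 * ψ x := hφlt
  constructor
  · rw [hlap, hpoisson x hx, heuler x hx]
    show 4*π * ψ x ^ 2 - γ/2 * ((γ * ψ x - φ x) * ψ x) ≤ ψ x ^ 2 * (4*π - γ^2/4)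
    have key : 0 < (γ/2 * ψ x) * (γ/2 * ψ x - φ x) :=
      mul_pos (mul_pos (by positivity) hψx) (sub_pos.mpr hφlt')
    nlinarith [key]
  · nlinarith [sq_nonneg (ψ x)]
end
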